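/- For every μ ∈ ℝ, all s, t > 0, and all x, y ∈ [0,1]: Q⁰(s+t, x, y) = ∫₀¹ Q⁰(s, x, z)·Q⁰(t, z, y) dz. -/

import Mathlib

/-!
`G(t,·)` is the heat kernel of the circle `ℝ/2ℤ`. Unfolding an integral over one period `[-1,1]`
to the whole line and using `g(s,·) * g(t,·) = g(s+t,·)` gives the semigroup law
`∫_{-1}^{1} G(s,z-a) G(t,z-b) dz = G(s+t,b-a)`; every term is nonnegative, so sums and integrals
are interchanged for lower Lebesgue integrals. As `G` is even, the integrand of the claim is
`F(z) + F(-z)` with `F(z) = (G(s,z-x) - G(s,z+x)) G(t,z-y)`, which folds `∫₀¹` onto `∫_{-1}^{1} F`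
(the method of images). The drift factors of `Q⁰` multiply to `e^{μ(y-x) - μ²(s+t)/2}`,
independently of `z`.
-/

open MeasureTheory

/-- The centered Gauss kernel `g(t,x) = (2πt)^{-1/2} e^{-x²/(2t)}`. -/
noncomputable def gauss (t x : ℝ) : ℝ :=
  (2 * Real.pi * t) ^ (-(1:ℝ)/2) * Real.exp (-x^2 / (2*t))

/-- The periodization `G(t,x) = Σ_{k ∈ ℤ} g(t, x + 2k)`. -/
noncomputable def GG (t x : ℝ) : ℝ := ∑' k : ℤ, gauss t (x + 2*k)

/-- The Dirichlet kernel `Q⁰(t,x,y) = e^{μ(y−x)−μ²t/2}(G(t,y−x) − G(t,y+x))`. -/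
noncomputable def Q0 (μ t x y : ℝ) : ℝ :=
  Real.exp (μ*(y-x) - μ^2*t/2) * (GG t (y-x) - GG t (y+x))

open Real Set ENNReal

lemma lintegral_Ioc_tsum_add_int_mul {f : ℝ → ℝ≥0∞} (hf : Measurable f) {T : ℝ} (hT : 0 < T)
    (a : ℝ) : ∫⁻ x in Ioc a (a + T), ∑' n : ℤ, f (x + n * T) = ∫⁻ x, f x := by
  rw [lintegral_tsum fun n : ℤ => by fun_prop,
    ← setLIntegral_univ, ← iUnion_Ioc_add_zsmul hT a,
    lintegral_iUnion (fun _ => measurableSet_Ioc) (pairwise_disjoint_Ioc_add_zsmul a T)]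
  refine tsum_congr fun n => ?_
  have h := (measurePreserving_add_right volume ((n : ℝ) * T)).setLIntegral_comp_preimage_emb
    (measurableEmbedding_addRight _) f (Ioc (a + n • T) (a + (n + 1) • T))
  rw [preimage_add_const_Ioc] at h
  convert h using 3
  simp only [zsmul_eq_mul, Int.cast_add, Int.cast_one]
  congr 1 <;> ring

section Gauss

variable {s t : ℝ}

lemma gauss_nonneg (ht : 0 < t) (x : ℝ) : 0 ≤ gauss t x := by
  unfold gauss
  have : 0 < 2 * π * t := by positivity
  positivity

lemma gauss_neg (t x : ℝ) : gauss t (-x) = gauss t x := by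
  rw [gauss, gauss, neg_sq]

lemma continuous_gauss (t : ℝ) : Continuous (gauss t) := by
  unfold gauss
  fun_prop

lemma integrable_gauss (ht : 0 < t) : Integrable (gauss t) := by
  have h := (integrable_exp_neg_mul_sq (by positivity : 0 < 1 / (2 * t))).const_mul
    ((2 * π * t) ^ (-(1:ℝ)/2))
  refine h.congr (ae_of_all _ fun x => ?_)
  simp only [gauss]
  congr 2
  ring

lemma integral_gauss (ht : 0 < t) : ∫ x, gauss t x = 1 := by
  have hpos : 0 < 2 * π * t := by positivity
  simp only [gauss, integral_const_mul]
  have h := integral_gaussian (1 / (2 * t))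
  simp only [neg_mul, one_div_mul_eq_div] at h
  simp only [neg_div, h]
  rw [show π / (1 / (2 * t)) = 2 * π * t by field_simp, sqrt_eq_rpow, ← rpow_add hpos]
  norm_num

lemma lintegral_gauss (ht : 0 < t) : ∫⁻ x, ENNReal.ofReal (gauss t x) = 1 := by
  rw [← ofReal_integral_eq_lintegral_ofReal (integrable_gauss ht)
    (ae_of_all _ (gauss_nonneg ht)), integral_gauss ht, ENNReal.ofReal_one]

/-- Completing the square in `w`: the second factor is the density at time `s` of the Brownian
bridge from `a` at time `0` to `b` at time `s + t`. -/
lemma gauss_mul_gauss (hs : 0 < s) (ht : 0 < t) (a b w : ℝ) :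
    gauss s (w - a) * gauss t (w - b)
      = gauss (s + t) (b - a) * gauss (s * t / (s + t)) (w - (t * a + s * b) / (s + t)) := by
  have hst : 0 < s + t := by positivity
  have hconst : (2 * π * s) ^ (-(1:ℝ)/2) * (2 * π * t) ^ (-(1:ℝ)/2)
      = (2 * π * (s + t)) ^ (-(1:ℝ)/2) * (2 * π * (s * t / (s + t))) ^ (-(1:ℝ)/2) := by
    rw [← mul_rpow (by positivity) (by positivity), ← mul_rpow (by positivity) (by positivity)]
    congr 1
    field_simp
  have hexp : -(w - a) ^ 2 / (2 * s) + -(w - b) ^ 2 / (2 * t)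
      = -(b - a) ^ 2 / (2 * (s + t))
        + -(w - (t * a + s * b) / (s + t)) ^ 2 / (2 * (s * t / (s + t))) := by
    field_simp
    ring
  simp only [gauss]
  calc _ = (2 * π * s) ^ (-(1:ℝ)/2) * (2 * π * t) ^ (-(1:ℝ)/2)
        * exp (-(w - a) ^ 2 / (2 * s) + -(w - b) ^ 2 / (2 * t)) := by rw [exp_add]; ring
    _ = _ := by rw [hconst, hexp, exp_add]; ring

lemma lintegral_gauss_mul_gauss (hs : 0 < s) (ht : 0 < t) (a b : ℝ) :
    ∫⁻ w, ENNReal.ofReal (gauss s (w - a) * gauss t (w - b))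
      = ENNReal.ofReal (gauss (s + t) (b - a)) := by
  have hst : 0 < s + t := by positivity
  simp_rw [gauss_mul_gauss hs ht, ENNReal.ofReal_mul (gauss_nonneg hst _)]
  rw [lintegral_const_mul' _ _ ofReal_ne_top,
    lintegral_sub_right_eq_self (fun w => ENNReal.ofReal (gauss (s * t / (s + t)) w)),
    lintegral_gauss (by positivity), mul_one]

end Gauss

section Periodization

variable {s t : ℝ}

lemma summable_gauss (ht : 0 < t) (u : ℝ) : Summable fun k : ℤ => gauss t (u + 2 * k) := by
  refine ((summable_pow_mul_jacobiTheta₂_term_bound (|u| / (π * t)) (T := 2 / (π * t))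
    (by positivity) 0).mul_left ((2 * π * t) ^ (-(1:ℝ)/2))).of_nonneg_of_le
    (fun k => gauss_nonneg ht _) fun k => ?_
  have hsq : -(u + 2 * k) ^ 2 ≤ -(4 * (k:ℝ) ^ 2 - 4 * |u| * |(k:ℝ)|) := by
    have huk := neg_abs_le (u * k)
    rw [abs_mul] at huk
    nlinarith [sq_nonneg u]
  have hexp : -π * (2 / (π * t) * (k:ℝ) ^ 2 - 2 * (|u| / (π * t)) * |(k:ℝ)|)
      = -(4 * (k:ℝ) ^ 2 - 4 * |u| * |(k:ℝ)|) / (2 * t) := by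
    field_simp
    ring
  rw [pow_zero, one_mul, Int.cast_abs, hexp, gauss]
  gcongr

lemma GG_periodic (t : ℝ) : Function.Periodic (GG t) 2 := fun x => by
  rw [GG, GG, ← (Equiv.addRight (1 : ℤ)).tsum_eq fun k => gauss t (x + 2 * k)]
  refine tsum_congr fun k => ?_
  simp only [Equiv.coe_addRight, Int.cast_add, Int.cast_one]
  ring_nf

lemma GG_neg (t x : ℝ) : GG t (-x) = GG t x := by
  rw [GG, GG, ← (Equiv.neg ℤ).tsum_eq fun k => gauss t (x + 2 * k)]
  refine tsum_congr fun k => ?_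
  rw [← gauss_neg]
  simp only [Equiv.neg_apply, Int.cast_neg]
  ring_nf

lemma GG_nonneg (ht : 0 < t) (x : ℝ) : 0 ≤ GG t x :=
  tsum_nonneg fun _ => gauss_nonneg ht _

lemma measurable_GG (t : ℝ) : Measurable (GG t) :=
  Measurable.tsum fun _ => (continuous_gauss t).measurable.comp (measurable_add_const _)

lemma ofReal_GG (ht : 0 < t) (x : ℝ) :
    ENNReal.ofReal (GG t x) = ∑' k : ℤ, ENNReal.ofReal (gauss t (x + 2 * k)) :=
  ENNReal.ofReal_tsum_of_nonneg (fun _ => gauss_nonneg ht _) (summable_gauss ht x)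

lemma lintegral_GG_mul_gauss (hs : 0 < s) (ht : 0 < t) (a b : ℝ) :
    ∫⁻ w, ENNReal.ofReal (GG s (w - a) * gauss t (w - b))
      = ENNReal.ofReal (GG (s + t) (b - a)) := by
  have hterm : ∀ j : ℤ,
      ∫⁻ w, ENNReal.ofReal (gauss s (w - a + 2 * j)) * ENNReal.ofReal (gauss t (w - b))
        = ENNReal.ofReal (gauss (s + t) (b - a + 2 * j)) := fun j => by
    rw [show b - a + 2 * j = b - (a - 2 * j) by ring,
      ← lintegral_gauss_mul_gauss hs ht (a - 2 * j) b]
    refine lintegral_congr fun w => ?_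
    rw [ENNReal.ofReal_mul (gauss_nonneg hs _)]
    congr 3
    ring
  have hexpand : ∀ w, ENNReal.ofReal (GG s (w - a) * gauss t (w - b))
      = ∑' j : ℤ, ENNReal.ofReal (gauss s (w - a + 2 * j)) * ENNReal.ofReal (gauss t (w - b)) :=
    fun w => by rw [ENNReal.ofReal_mul (GG_nonneg hs _), ofReal_GG hs, ENNReal.tsum_mul_right]
  have hmeas : ∀ j : ℤ, AEMeasurable fun w =>
      ENNReal.ofReal (gauss s (w - a + 2 * j)) * ENNReal.ofReal (gauss t (w - b)) := fun j => by
    have := continuous_gauss s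
    have := continuous_gauss t
    fun_prop
  rw [lintegral_congr hexpand, lintegral_tsum hmeas, ofReal_GG (by positivity)]
  exact tsum_congr hterm

end Periodization

section HeatKernelOnCircle

variable {s t : ℝ}

lemma lintegral_GG_mul_GG (hs : 0 < s) (ht : 0 < t) (a b : ℝ) :
    ∫⁻ z in Ioc (-1) 1, ENNReal.ofReal (GG s (z - a) * GG t (z - b))
      = ENNReal.ofReal (GG (s + t) (b - a)) := by
  have hunfold : ∀ z, ENNReal.ofReal (GG s (z - a) * GG t (z - b))
      = ∑' n : ℤ, ENNReal.ofReal (GG s (z + n * 2 - a) * gauss t (z + n * 2 - b)) := fun z => by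
    rw [ENNReal.ofReal_mul (GG_nonneg hs _), ofReal_GG ht, ← ENNReal.tsum_mul_left]
    refine tsum_congr fun n => ?_
    rw [add_sub_right_comm, (GG_periodic s).int_mul n, ENNReal.ofReal_mul (GG_nonneg hs _)]
    ring_nf
  have hmeas : Measurable fun w => ENNReal.ofReal (GG s (w - a) * gauss t (w - b)) := by
    have := measurable_GG s
    have := (continuous_gauss t).measurable
    fun_prop
  rw [lintegral_congr hunfold, show Ioc (-1 : ℝ) 1 = Ioc (-1) (-1 + 2) by norm_num,
    lintegral_Ioc_tsum_add_int_mul hmeas two_pos, lintegral_GG_mul_gauss hs ht]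

lemma intervalIntegrable_GG_mul_GG (hs : 0 < s) (ht : 0 < t) (a b : ℝ) :
    IntervalIntegrable (fun z => GG s (z - a) * GG t (z - b)) volume (-1) 1 := by
  refine (intervalIntegrable_iff_integrableOn_Ioc_of_le (by norm_num)).2
    ⟨by have := measurable_GG s; have := measurable_GG t; fun_prop, ?_⟩
  rw [hasFiniteIntegral_iff_ofReal
    (ae_of_all _ fun z => mul_nonneg (GG_nonneg hs _) (GG_nonneg ht _)),
    lintegral_GG_mul_GG hs ht]
  exact ofReal_lt_top

lemma integral_GG_mul_GG (hs : 0 < s) (ht : 0 < t) (a b : ℝ) :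
    ∫ z in (-1)..1, GG s (z - a) * GG t (z - b) = GG (s + t) (b - a) := by
  rw [intervalIntegral.integral_of_le (by norm_num),
    integral_eq_lintegral_of_nonneg_ae
      (ae_of_all _ fun z => mul_nonneg (GG_nonneg hs _) (GG_nonneg ht _))
      (by have := measurable_GG s; have := measurable_GG t; fun_prop),
    lintegral_GG_mul_GG hs ht, toReal_ofReal (GG_nonneg (by positivity) _)]

lemma integral_GG_sub_mul_GG_sub (hs : 0 < s) (ht : 0 < t) (x y : ℝ) :
    ∫ z in (0:ℝ)..1, (GG s (z - x) - GG s (z + x)) * (GG t (y - z) - GG t (y + z))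
      = GG (s + t) (y - x) - GG (s + t) (y + x) := by
  set F : ℝ → ℝ := fun z => GG s (z - x) * GG t (z - y) - GG s (z - -x) * GG t (z - y)
  have hF : IntervalIntegrable F volume (-1) 1 :=
    (intervalIntegrable_GG_mul_GG hs ht x y).sub (intervalIntegrable_GG_mul_GG hs ht (-x) y)
  have hF₀ : IntervalIntegrable F volume 0 1 :=
    hF.mono_set (by simp [uIcc_of_le, Icc_subset_Icc_iff])
  have hF₁ : IntervalIntegrable F volume (-1) 0 :=
    hF.mono_set (by simp [uIcc_of_le, Icc_subset_Icc_iff])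
  have hsymm : ∀ z,
      F z + F (-z) = (GG s (z - x) - GG s (z + x)) * (GG t (y - z) - GG t (y + z)) :=
    fun z => by
      simp only [F, show -z - x = -(z + x) by ring, show -z - -x = -(z - x) by ring,
        show -z - y = -(y + z) by ring, show z - y = -(y - z) by ring,
        show z - -x = z + x by ring, GG_neg]
      ring
  calc _ = ∫ z in (0:ℝ)..1, F z + F (-z) :=
        (intervalIntegral.integral_congr fun z _ => hsymm z).symm
    _ = (∫ z in (-1:ℝ)..0, F z) + ∫ z in (0:ℝ)..1, F z := by
      rw [intervalIntegral.integral_add hF₀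
          (by simpa using ((IntervalIntegrable.iff_comp_neg).mp hF₁).symm),
        intervalIntegral.integral_comp_neg, neg_zero, add_comm]
    _ = ∫ z in (-1:ℝ)..1, F z := intervalIntegral.integral_add_adjacent_intervals hF₁ hF₀
    _ = _ := by
      rw [intervalIntegral.integral_sub (intervalIntegrable_GG_mul_GG hs ht x y)
        (intervalIntegrable_GG_mul_GG hs ht (-x) y), integral_GG_mul_GG hs ht,
        integral_GG_mul_GG hs ht, sub_neg_eq_add]

end HeatKernelOnCircle

theorem stmt19_general (μ s t x y : ℝ) (hs : 0 < s) (ht : 0 < t) :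
    Q0 μ (s+t) x y = ∫ z in (0:ℝ)..1, Q0 μ s x z * Q0 μ t z y := by
  have hfactor : ∀ z, Q0 μ s x z * Q0 μ t z y = exp (μ * (y - x) - μ ^ 2 * (s + t) / 2)
      * ((GG s (z - x) - GG s (z + x)) * (GG t (y - z) - GG t (y + z))) := fun z => by
    rw [Q0, Q0, mul_mul_mul_comm, ← exp_add]
    ring_nf
  simp_rw [hfactor, intervalIntegral.integral_const_mul, integral_GG_sub_mul_GG_sub hs ht, Q0]

/-- Chapman–Kolmogorov, first identity of (A.2):
`Q⁰(s+t,x,y) = ∫₀¹ Q⁰(s,x,z) Q⁰(t,z,y) dz`. -/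
theorem stmt19 (μ s t x y : ℝ) (hs : 0 < s) (ht : 0 < t)
    (hx : x ∈ Set.Icc (0:ℝ) 1) (hy : y ∈ Set.Icc (0:ℝ) 1) :
    Q0 μ (s+t) x y = ∫ z in (0:ℝ)..1, Q0 μ s x z * Q0 μ t z y :=
  stmt19_general μ s t x y hs ht
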